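/- Return-time counting estimate (the quantitative core of Lemma 6 of the paper, stated for real sequences): Let E > 0, let ε be a real number with 0 < ε < E/18, and let N > 7 be an integer. Let (r_i)_{i ≥ 0} be a sequence of positive reals and set Rⁿ := ∑_{i=0}^{n−1} r_i. Assume r_0 ≤ εN and |Rⁿ/n − E| ≤ ε for every integer n ≥ N. Let m be a real number with m > (E + ε)N, let k be a real number with 0 ≤ k ≤ r_0, and let a, b be positive integers such that R^a ≤ m + k ≤ R^{a+1} and R^{a+b} ≤ 2m + k ≤ R^{a+b+1}. Then 7m/(8(E + ε)) ≤ a ≤ m/(E − 2ε) and m/(2(E − 2ε)) ≤ b ≤ 2m/(E − 2ε). -/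
import Mathlib


/-- Return-time counting estimate (the quantitative core of Lemma 6 of the paper). -/
theorem return_time_counting_estimate
    (E ε : ℝ) (hE : 0 < E) (hε : 0 < ε) (hεE : ε < E / 18)
    (N : ℕ) (hN : 7 < N) (r : ℕ → ℝ) (hr : ∀ i, 0 < r i)
    (hr0 : r 0 ≤ ε * N)
    (hR : ∀ n : ℕ, N ≤ n → |(∑ i ∈ Finset.range n, r i) / (n : ℝ) - E| ≤ ε)
    (m : ℝ) (hm : (E + ε) * N < m)
    (k : ℝ) (hk0 : 0 ≤ k) (hkr : k ≤ r 0)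
    (a b : ℕ) (ha : 0 < a) (hb : 0 < b)
    (h1 : ∑ i ∈ Finset.range a, r i ≤ m + k)
    (h2 : m + k ≤ ∑ i ∈ Finset.range (a + 1), r i)
    (h3 : ∑ i ∈ Finset.range (a + b), r i ≤ 2 * m + k)
    (h4 : 2 * m + k ≤ ∑ i ∈ Finset.range (a + b + 1), r i) :
    (7 * m / (8 * (E + ε)) ≤ (a : ℝ) ∧ (a : ℝ) ≤ m / (E - 2 * ε)) ∧
    (m / (2 * (E - 2 * ε)) ≤ (b : ℝ) ∧ (b : ℝ) ≤ 2 * m / (E - 2 * ε)) := by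
  set S : ℕ → ℝ := fun n => ∑ i ∈ Finset.range n, r i with hSdef
  have hSmono : ∀ p q : ℕ, p ≤ q → S p ≤ S q := by
    intro p q hpq
    apply Finset.sum_le_sum_of_subset_of_nonneg (Finset.range_subset_range.mpr hpq)
    intro i _ _; exact (hr i).le
  have hub : ∀ n : ℕ, N ≤ n → S n ≤ (E + ε) * n := by
    intro n hn
    have hn0' : 0 < n := by omega
    have hn0 : (0:ℝ) < n := by exact_mod_cast hn0'
    rcases abs_le.mp (hR n hn) with ⟨_, h⟩
    have := (div_le_iff₀ hn0).mp (by linarith : S n / n ≤ E + ε)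
    linarith
  have hlb : ∀ n : ℕ, N ≤ n → (E - ε) * n ≤ S n := by
    intro n hn
    have hn0' : 0 < n := by omega
    have hn0 : (0:ℝ) < n := by exact_mod_cast hn0'
    rcases abs_le.mp (hR n hn) with ⟨h, _⟩
    have := (le_div_iff₀ hn0).mp (by linarith : E - ε ≤ S n / n)
    linarith
  -- a ≥ N
  have haN : N ≤ a := by
    by_contra hcon
    push_neg at hcon
    have h5 : S (a + 1) ≤ S N := hSmono _ _ (by omega)
    have h6 : S N ≤ (E + ε) * N := hub N le_rfl
    have : m + k ≤ (E + ε) * N := le_trans h2 (le_trans h5 h6)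
    linarith
  have hAn : (N:ℝ) ≤ (a:ℝ) := by exact_mod_cast haN
  have hN8 : (8:ℝ) ≤ (N:ℝ) := by exact_mod_cast (by omega : 8 ≤ N)
  have hEε : 0 < E + ε := by linarith
  have hE2ε : 0 < E - 2 * ε := by linarith
  have hNpos : (0:ℝ) < N := by linarith
  have hm8 : 8 * (E + ε) ≤ m := by nlinarith
  have hkn : k ≤ ε * N := le_trans hkr hr0
  have hq2 : m + k ≤ (E + ε) * ((a:ℝ) + 1) := by
    have := hub (a + 1) (by omega)
    push_cast at this
    linarith
  have hq1 : (E - ε) * (a:ℝ) ≤ m + k := by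
    have := hlb a haN
    linarith
  have hq3 : (E - ε) * ((a:ℝ) + (b:ℝ)) ≤ 2 * m + k := by
    have := hlb (a + b) (by omega)
    push_cast at this
    linarith
  have hq4 : 2 * m + k ≤ (E + ε) * ((a:ℝ) + (b:ℝ) + 1) := by
    have := hub (a + b + 1) (by omega)
    push_cast at this
    linarith
  have hmpos : 0 < m := by nlinarith
  have hB0 : (0:ℝ) ≤ (b:ℝ) := Nat.cast_nonneg b
  -- upper bound on a
  have ga2 : (a:ℝ) ≤ m / (E - 2 * ε) := by
    rw [le_div_iff₀ hE2ε]
    nlinarith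
  constructor
  · constructor
    · rw [div_le_iff₀ (by positivity : (0:ℝ) < 8 * (E + ε))]
      nlinarith
    · exact ga2
  · constructor
    · rw [div_le_iff₀ (by positivity : (0:ℝ) < 2 * (E - 2 * ε))]
      have ga2' : (a:ℝ) * (E - 2 * ε) ≤ m := (le_div_iff₀ hE2ε).mp ga2
      have p1 : (E - 2 * ε) * (2 * m + k) ≤ (E - 2 * ε) * ((E + ε) * ((a:ℝ) + (b:ℝ) + 1)) :=
        mul_le_mul_of_nonneg_left hq4 hE2ε.le
      have p2 : (E + ε) * ((a:ℝ) * (E - 2 * ε)) ≤ (E + ε) * m :=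
        mul_le_mul_of_nonneg_left ga2' hEε.le
      have p3 : (0:ℝ) ≤ (E - 11 * ε) * (m - 8 * (E + ε)) :=
        mul_nonneg (by linarith) (by linarith)
      have p4 : (0:ℝ) ≤ k * (E - 2 * ε) := mul_nonneg hk0 hE2ε.le
      have p5 : (0:ℝ) ≤ (E + ε) * (6 * E - 84 * ε) :=
        mul_nonneg hEε.le (by linarith)
      have key : m * (E + ε) ≤ (b:ℝ) * (2 * (E - 2 * ε)) * (E + ε) := by linarith
      exact le_of_mul_le_mul_right key hEε
    · rw [le_div_iff₀ hE2ε]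
      have p6 : (E - ε) * (N:ℝ) ≤ (E - ε) * (a:ℝ) :=
        mul_le_mul_of_nonneg_left hAn (by linarith)
      have p7 : (0:ℝ) ≤ ε * (b:ℝ) := mul_nonneg hε.le hB0
      have p8 : (0:ℝ) ≤ (E - 2 * ε) * (N:ℝ) := mul_nonneg hE2ε.le hNpos.le
      linarith
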